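/- Let δ : [0,∞) → [0,1] and d : [0,∞) → ℝ be such that for every t ≥ 0 the function δ has (one-sided, within [0,∞)) derivative d(t) at t, d is continuous on [0,∞), d(t) ≤ 0 for all t ≥ 0, δ(0) = 1, and δ(t+s) ≥ δ(t)·δ(s) for all s, t ≥ 0. Then 1 − δ(t) ≤ |d(0)|·t for every t ≥ 0. (Lemma 2.3, second inequality.) -/

import Mathlib

/-!
Fix `t ≥ 0`. The function `s ↦ δ (t + s) - δ t * δ s` is nonnegative on `[0, ∞)` and vanishes at
`s = 0`, so its right derivative there, `d t - δ t * d 0`, is nonnegative. Since `δ ≤ 1 = δ 0`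
forces `d 0 ≤ 0`, this gives `d 0 ≤ δ t * d 0 ≤ d t`: the derivative is smallest at the origin.
Hence `x ↦ δ x - d 0 * x` is nondecreasing, which is the claim.
-/

open Set

theorem IsMinOn.hasDerivWithinAt_Ici_nonneg {f : ℝ → ℝ} {f' a : ℝ} (hmin : IsMinOn f (Ici a) a)
    (hf : HasDerivWithinAt f f' (Ici a) a) : 0 ≤ f' := by
  have hcone : (1 : ℝ) ∈ posTangentConeAt (Ici a) a :=
    mem_posTangentConeAt_of_segment_subset (by simp [segment_eq_Icc, Icc_subset_Ici_self])
  simpa using hmin.localize.hasFDerivWithinAt_nonneg hf.hasFDerivWithinAt hcone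

theorem IsMaxOn.hasDerivWithinAt_Ici_nonpos {f : ℝ → ℝ} {f' a : ℝ} (hmax : IsMaxOn f (Ici a) a)
    (hf : HasDerivWithinAt f f' (Ici a) a) : f' ≤ 0 :=
  neg_nonneg.1 (hmax.neg.hasDerivWithinAt_Ici_nonneg hf.neg)

theorem le_of_hasDerivWithinAt_Ici_of_le {f f' : ℝ → ℝ} {a c : ℝ}
    (hf : ∀ x, a ≤ x → HasDerivWithinAt f (f' x) (Ici a) x) (hc : ∀ x, a ≤ x → c ≤ f' x)
    {t : ℝ} (ht : a ≤ t) : f a + c * (t - a) ≤ f t := by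
  have hmono : MonotoneOn (fun x => f x - c * x) (Ici a) := by
    refine monotoneOn_of_hasDerivWithinAt_nonneg (f' := fun x => f' x - c) (convex_Ici a)
      (fun x hx => ((hf x hx).continuousWithinAt.sub (continuousWithinAt_const.mul
        continuousWithinAt_id)))
      (fun x hx => ?_) (fun x hx => ?_)
    · rw [interior_Ici] at hx ⊢
      simpa using ((hf x hx.le).mono Ioi_subset_Ici_self).fun_sub
        ((hasDerivWithinAt_id x _).const_mul c)
    · rw [interior_Ici] at hx
      exact sub_nonneg.2 (hc x hx.le)
  linarith [hmono self_mem_Ici ht ht]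

theorem deriv_zero_le_of_supermultiplicative {δ d : ℝ → ℝ} (hle : ∀ t, 0 ≤ t → δ t ≤ 1)
    (hderiv : ∀ t, 0 ≤ t → HasDerivWithinAt δ (d t) (Ici 0) t) (hδ0 : δ 0 = 1)
    (hsub : ∀ s t, 0 ≤ s → 0 ≤ t → δ t * δ s ≤ δ (t + s)) (hd0 : d 0 ≤ 0) {t : ℝ} (ht : 0 ≤ t) :
    d 0 ≤ d t := by
  have hmin : IsMinOn (fun s => δ (t + s) - δ t * δ s) (Ici 0) 0 := fun s hs => by
    simpa [hδ0] using hsub s t hs ht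
  have hshift : HasDerivWithinAt (fun s => δ (t + s)) (d t) (Ici 0) 0 := by
    have hadd : HasDerivWithinAt (t + ·) 1 (Ici 0) 0 := (hasDerivWithinAt_id 0 _).const_add t
    simpa [Function.comp_def] using
      (hderiv t ht).comp_of_eq 0 hadd (fun s hs => add_nonneg ht hs) (add_zero t).symm
  have hslope : 0 ≤ d t - δ t * d 0 :=
    hmin.hasDerivWithinAt_Ici_nonneg (hshift.fun_sub ((hderiv 0 le_rfl).const_mul (δ t)))
  have hscale : d 0 ≤ δ t * d 0 := by nlinarith [hle t ht]
  linarith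

theorem stmt_1_general (δ d : ℝ → ℝ)
    (hrange : ∀ t : ℝ, 0 ≤ t → δ t ∈ Set.Icc (0 : ℝ) 1)
    (hderiv : ∀ t : ℝ, 0 ≤ t → HasDerivWithinAt δ (d t) (Set.Ici 0) t)
    (hδ0 : δ 0 = 1)
    (hsub : ∀ s t : ℝ, 0 ≤ s → 0 ≤ t → δ (t + s) ≥ δ t * δ s) :
    ∀ t : ℝ, 0 ≤ t → 1 - δ t ≤ |d 0| * t := by
  intro t ht
  have hle : ∀ t, 0 ≤ t → δ t ≤ 1 := fun t ht => (hrange t ht).2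
  have hd0 : d 0 ≤ 0 :=
    IsMaxOn.hasDerivWithinAt_Ici_nonpos (fun s hs => by simpa [hδ0] using hle s hs)
      (hderiv 0 le_rfl)
  have hline := le_of_hasDerivWithinAt_Ici_of_le hderiv
    (fun x hx => deriv_zero_le_of_supermultiplicative hle hderiv hδ0 hsub hd0 hx) ht
  rw [abs_of_nonpos hd0]
  linarith

/-- Lemma 2.3, second inequality: with `δ : [0,∞) → [0,1]`, derivative `d` continuous and
nonpositive on `[0,∞)`, `δ 0 = 1` and log sub-additivity, one has `1 - δ t ≤ |d 0| * t`. -/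
theorem stmt_1 (δ d : ℝ → ℝ)
    (hrange : ∀ t : ℝ, 0 ≤ t → δ t ∈ Set.Icc (0 : ℝ) 1)
    (hderiv : ∀ t : ℝ, 0 ≤ t → HasDerivWithinAt δ (d t) (Set.Ici 0) t)
    (hdcont : ContinuousOn d (Set.Ici 0))
    (hdneg : ∀ t : ℝ, 0 ≤ t → d t ≤ 0)
    (hδ0 : δ 0 = 1)
    (hsub : ∀ s t : ℝ, 0 ≤ s → 0 ≤ t → δ (t + s) ≥ δ t * δ s) :
    ∀ t : ℝ, 0 ≤ t → 1 - δ t ≤ |d 0| * t :=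
  stmt_1_general δ d hrange hderiv hδ0 hsub
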